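/- arXiv:1505.00482 — 3 statements merged into one kernel-verified Lean document; each statement's English description precedes it below -/
import Mathlib

section
/- Let p be a bounded probability density on ℝ^d with bounded continuous derivatives up to and including third order, and let p_h = p ∗ K_h be its smoothing by the Gaussian kernel at bandwidth h. Then there exists a constant c₁ > 0 (depending only on p and d) such that for all h ∈ (0,1], sup_{x ∈ ℝ^d} ‖∇p_h(x) − ∇p(x)‖ ≤ c₁ h², where ∇ denotes the gradient and ‖·‖ the Euclidean norm. -/
/-!
Differentiating under the integral, `∇p_h(x) = ∫ K_h(u) ∇p(x - u) du`. As `K_h` has mass one and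
is even, subtracting `∇p(x)` and the odd first-order term `D²p(x) u` (whose integral vanishes)
leaves the first-order Taylor remainder of `∇p`, which is at most `‖D³p‖_∞ ‖u‖²`. Hence the bias
is at most `‖D³p‖_∞ ∫ ‖u‖² K_h(u) du`, and this second moment equals `h² ∫ ‖v‖² K_1(v) dv`.
-/

open MeasureTheory Real

/-- The Gaussian kernel on `ℝ^d` at bandwidth `h`:
`K_h(u) = h^{-d} (2π)^{-d/2} exp(-‖u‖²/(2h²))`. -/
noncomputable def gaussKernel (d : ℕ) (h : ℝ) (u : EuclideanSpace ℝ (Fin d)) : ℝ :=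
  (1 / h ^ d) * (2 * π) ^ (-(d : ℝ) / 2) * Real.exp (-‖u‖ ^ 2 / (2 * h ^ 2))

/-- The smoothed density `p_h = p ∗ K_h`. -/
noncomputable def smoothedDensity (d : ℕ) (p : EuclideanSpace ℝ (Fin d) → ℝ) (h : ℝ)
    (x : EuclideanSpace ℝ (Fin d)) : ℝ :=
  ∫ u, p (x - u) * gaussKernel d h u

section Taylor

variable {E F : Type*} [NormedAddCommGroup E] [NormedSpace ℝ E] [NormedAddCommGroup F]
  [NormedSpace ℝ F]

theorem norm_image_add_sub_sub_fderiv_le {f : E → F} {L : NNReal} (hf : Differentiable ℝ f)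
    (hf' : LipschitzWith L (fderiv ℝ f)) (x u : E) :
    ‖f (x + u) - f x - fderiv ℝ f x u‖ ≤ L * ‖u‖ ^ 2 := by
  have key := (convex_closedBall x ‖u‖).norm_image_sub_le_of_norm_fderiv_le' (fun y _ => hf y)
    (fun y hy => (hf'.norm_sub_le y x).trans
      (mul_le_mul_of_nonneg_left (mem_closedBall_iff_norm.mp hy) L.2))
    (Metric.mem_closedBall_self (norm_nonneg u))
    (by rw [mem_closedBall_iff_norm, add_sub_cancel_left])
  simpa [sq, mul_assoc] using key

theorem ContDiff.lipschitzWith_fderiv_fderiv {f : E → F} {M : ℝ} (hf : ContDiff ℝ 3 f)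
    (hM : ∀ x, ‖iteratedFDeriv ℝ 3 f x‖ ≤ M) :
    LipschitzWith M.toNNReal (fderiv ℝ (fderiv ℝ f)) := by
  have hf'' : ContDiff ℝ 1 (fderiv ℝ (fderiv ℝ f)) :=
    (hf.fderiv_right (m := 2) (by norm_num)).fderiv_right (by norm_num)
  refine lipschitzWith_of_nnnorm_fderiv_le (hf''.differentiable one_ne_zero) fun z => ?_
  rw [Real.le_toNNReal_iff_coe_le ((norm_nonneg _).trans (hM z)), coe_nnnorm,
    ← norm_iteratedFDeriv_zero (𝕜 := ℝ), norm_iteratedFDeriv_fderiv, norm_iteratedFDeriv_fderiv,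
    norm_iteratedFDeriv_fderiv]
  exact hM z

end Taylor

section Convolution

variable {E F : Type*} [NormedAddCommGroup E] [MeasurableSpace E] [BorelSpace E]
  {μ : Measure E} {K : E → ℝ}

theorem MeasureTheory.Integrable.norm_mul_of_sq_norm_mul (hK : Integrable K μ)
    (hK₂ : Integrable (fun u => ‖u‖ ^ 2 * K u) μ) : Integrable (fun u => ‖u‖ * K u) μ := by
  refine (hK.norm.add hK₂.norm).mono' (continuous_norm.aestronglyMeasurable.mul hK.1) ?_
  filter_upwards with u
  have : ‖u‖ ≤ 1 + ‖u‖ ^ 2 := by nlinarith [sq_nonneg (‖u‖ - 1)]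
  simp only [norm_mul, norm_norm, norm_pow, Pi.add_apply]
  nlinarith [norm_nonneg (K u)]

variable [NormedSpace ℝ E] [NormedAddCommGroup F] [NormedSpace ℝ F]

theorem integral_smul_clm_eq_zero_of_even [μ.IsNegInvariant] (hK : ∀ u, K (-u) = K u)
    (B : E →L[ℝ] F) : ∫ u, K u • B u ∂μ = 0 := by
  have h := integral_neg_eq_self (fun u => K u • B u) μ
  simp only [hK, map_neg, smul_neg, integral_neg] at h
  have h2 : (2 : ℝ) • ∫ u, K u • B u ∂μ = 0 := by
    rw [two_smul]; nth_rw 1 [← h]; exact neg_add_cancel _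
  exact (smul_eq_zero.mp h2).resolve_left two_ne_zero

variable [SecondCountableTopology E]

theorem hasFDerivAt_integral_comp_sub_mul {p : E → ℝ} {M₀ M₁ : ℝ} (hp : ContDiff ℝ 1 p)
    (hp_bdd : ∀ y, ‖p y‖ ≤ M₀) (hp'_bdd : ∀ y, ‖fderiv ℝ p y‖ ≤ M₁) (hK : Integrable K μ)
    (x : E) :
    HasFDerivAt (fun x => ∫ u, p (x - u) * K u ∂μ) (∫ u, K u • fderiv ℝ p (x - u) ∂μ) x := by
  have hp_shift : ∀ x : E, Continuous fun u => p (x - u) := fun x =>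
    hp.continuous.comp (continuous_const.sub continuous_id)
  refine hasFDerivAt_integral_of_dominated_of_fderiv_le
    (F' := fun y u => K u • fderiv ℝ p (y - u)) (bound := fun u => ‖K u‖ * M₁)
    (Metric.ball_mem_nhds x one_pos)
    (.of_forall fun y => (hp_shift y).aestronglyMeasurable.mul hK.1) ?_ ?_
    (.of_forall fun u y _ => ?_) (hK.norm.mul_const M₁) (.of_forall fun u y _ => ?_)
  · refine (hK.norm.const_mul M₀).mono' ((hp_shift x).aestronglyMeasurable.mul hK.1)
      (.of_forall fun u => ?_)
    rw [norm_mul]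
    exact mul_le_mul_of_nonneg_right (hp_bdd _) (norm_nonneg _)
  · exact hK.1.smul ((hp.continuous_fderiv one_ne_zero).comp
      (continuous_const.sub continuous_id)).aestronglyMeasurable
  · rw [norm_smul]
    exact mul_le_mul_of_nonneg_left (hp'_bdd _) (norm_nonneg _)
  · have := ((hp.differentiable one_ne_zero (y - u)).hasFDerivAt.comp y
      ((hasFDerivAt_id y).sub_const u)).mul_const (K u)
    simpa [Function.comp_def] using this

theorem norm_integral_smul_comp_sub_sub_le [CompleteSpace F] [μ.IsNegInvariant]
    (hK_nonneg : ∀ u, 0 ≤ K u) (hK_even : ∀ u, K (-u) = K u) (hK_mass : ∫ u, K u ∂μ = 1)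
    (hK₂ : Integrable (fun u => ‖u‖ ^ 2 * K u) μ) {g : E → F} {L : NNReal}
    (hg : Differentiable ℝ g) (hg' : LipschitzWith L (fderiv ℝ g)) (x : E) :
    ‖∫ u, K u • g (x - u) ∂μ - g x‖ ≤ L * ∫ u, ‖u‖ ^ 2 * K u ∂μ := by
  have hK : Integrable K μ := Integrable.of_integral_ne_zero (by simp [hK_mass])
  set B := fderiv ℝ g x
  set R : E → F := fun u => g (x - u) - g x + B u
  have hR : ∀ u, ‖R u‖ ≤ L * ‖u‖ ^ 2 := fun u => by
    simpa [R, sub_eq_add_neg, add_assoc] using norm_image_add_sub_sub_fderiv_le hg hg' x (-u)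
  have hKR_bdd : ∀ u, ‖K u • R u‖ ≤ L * (‖u‖ ^ 2 * K u) := fun u => by
    rw [norm_smul, Real.norm_of_nonneg (hK_nonneg u)]
    nlinarith [hR u, hK_nonneg u]
  have hR_cont : Continuous R :=
    ((hg.continuous.comp (continuous_const.sub continuous_id)).sub continuous_const).add
      B.continuous
  have hKR : Integrable (fun u => K u • R u) μ :=
    (hK₂.const_mul L).mono' (hK.1.smul hR_cont.aestronglyMeasurable) (.of_forall hKR_bdd)
  have hKB : Integrable (fun u => K u • B u) μ := by
    refine ((hK.norm_mul_of_sq_norm_mul hK₂).const_mul ‖B‖).mono'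
      (hK.1.smul B.continuous.aestronglyMeasurable) (.of_forall fun u => ?_)
    rw [norm_smul, Real.norm_of_nonneg (hK_nonneg u)]
    nlinarith [B.le_opNorm u, hK_nonneg u]
  have hsplit : ∫ u, K u • g (x - u) ∂μ = ∫ u, K u • R u ∂μ + g x := by
    calc ∫ u, K u • g (x - u) ∂μ = ∫ u, (K u • R u + K u • g x - K u • B u) ∂μ := by
          congr 1; ext u; simp only [R, smul_add, smul_sub]; abel
      _ = ∫ u, K u • R u ∂μ + (∫ u, K u ∂μ) • g x - ∫ u, K u • B u ∂μ := by
          rw [integral_sub ?_ hKB, integral_add hKR (hK.smul_const _), integral_smul_const]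
          exact hKR.add (hK.smul_const _)
      _ = ∫ u, K u • R u ∂μ + g x := by
          rw [hK_mass, one_smul, integral_smul_clm_eq_zero_of_even hK_even, sub_zero]
  rw [hsplit, add_sub_cancel_right, ← integral_const_mul]
  exact norm_integral_le_of_norm_le (hK₂.const_mul L) (.of_forall hKR_bdd)

end Convolution

section Gaussian

theorem integrable_sq_norm_mul_exp_neg_mul_sq_norm {V : Type*} [NormedAddCommGroup V]
    [InnerProductSpace ℝ V] [FiniteDimensional ℝ V] [MeasurableSpace V] [BorelSpace V] {b : ℝ}
    (hb : 0 < b) : Integrable fun v : V => ‖v‖ ^ 2 * rexp (-b * ‖v‖ ^ 2) := by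
  have hb2 : 0 < b / 2 := half_pos hb
  have hexp : Integrable fun v : V => rexp (-(b / 2) * ‖v‖ ^ 2) :=
    Integrable.of_integral_ne_zero <| by
      rw [GaussianFourier.integral_rexp_neg_mul_sq_norm hb2]; positivity
  -- `t ≤ exp t` at `t = b‖v‖²/2` gives `‖v‖² exp (-b‖v‖²) ≤ (2/b) exp (-b‖v‖²/2)`
  refine (hexp.const_mul (2 / b)).mono' (by fun_prop) (.of_forall fun v => ?_)
  have key : b / 2 * ‖v‖ ^ 2 ≤ rexp (b / 2 * ‖v‖ ^ 2) := by
    linarith [Real.add_one_le_exp (b / 2 * ‖v‖ ^ 2)]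
  rw [Real.norm_of_nonneg (by positivity)]
  calc ‖v‖ ^ 2 * rexp (-b * ‖v‖ ^ 2)
      = 2 / b * (b / 2 * ‖v‖ ^ 2) * rexp (-b * ‖v‖ ^ 2) := by field_simp
    _ ≤ 2 / b * rexp (b / 2 * ‖v‖ ^ 2) * rexp (-b * ‖v‖ ^ 2) := by gcongr
    _ = 2 / b * rexp (-(b / 2) * ‖v‖ ^ 2) := by rw [mul_assoc, ← Real.exp_add]; ring_nf

variable (d : ℕ) {h : ℝ}

theorem gaussKernel_eq_mul_exp (u : EuclideanSpace ℝ (Fin d)) :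
    gaussKernel d h u
      = 1 / h ^ d * (2 * π) ^ (-(d : ℝ) / 2) * rexp (-(1 / (2 * h ^ 2)) * ‖u‖ ^ 2) := by
  rw [gaussKernel]; ring_nf

theorem gaussKernel_nonneg (hh : 0 < h) (u : EuclideanSpace ℝ (Fin d)) :
    0 ≤ gaussKernel d h u := by
  rw [gaussKernel]; positivity

theorem gaussKernel_neg (u : EuclideanSpace ℝ (Fin d)) :
    gaussKernel d h (-u) = gaussKernel d h u := by
  simp [gaussKernel]

theorem gaussKernel_smul (hh : 0 < h) (v : EuclideanSpace ℝ (Fin d)) :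
    gaussKernel d h (h • v) = (h ^ d)⁻¹ * gaussKernel d 1 v := by
  simp only [gaussKernel, norm_smul, Real.norm_of_nonneg hh.le, mul_pow, one_pow]
  field_simp

theorem integral_gaussKernel (hh : 0 < h) : ∫ u, gaussKernel d h u = 1 := by
  simp_rw [gaussKernel_eq_mul_exp]
  rw [integral_const_mul, GaussianFourier.integral_rexp_neg_mul_sq_norm (by positivity),
    finrank_euclideanSpace_fin, neg_div, Real.rpow_neg (by positivity),
    show π / (1 / (2 * h ^ 2)) = 2 * π * h ^ 2 by field_simp,
    Real.mul_rpow (x := 2 * π) (y := h ^ 2) (by positivity) (by positivity),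
    ← Real.rpow_natCast h 2, ← Real.rpow_mul hh.le]
  rw [show ((2 : ℕ) : ℝ) * (d / 2) = d by push_cast; ring, Real.rpow_natCast]
  field_simp

theorem integrable_sq_norm_mul_gaussKernel (hh : 0 < h) :
    Integrable fun u : EuclideanSpace ℝ (Fin d) => ‖u‖ ^ 2 * gaussKernel d h u := by
  simp_rw [gaussKernel_eq_mul_exp, mul_left_comm (‖_‖ ^ 2)]
  exact (integrable_sq_norm_mul_exp_neg_mul_sq_norm (by positivity)).const_mul _

theorem integral_sq_norm_mul_gaussKernel (hh : 0 < h) :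
    ∫ u, ‖u‖ ^ 2 * gaussKernel d h u
      = h ^ 2 * ∫ v : EuclideanSpace ℝ (Fin d), ‖v‖ ^ 2 * gaussKernel d 1 v := by
  have hscale := Measure.integral_comp_smul volume
    (fun u : EuclideanSpace ℝ (Fin d) => ‖u‖ ^ 2 * gaussKernel d h u) h
  simp only [gaussKernel_smul d hh, norm_smul, Real.norm_of_nonneg hh.le, mul_pow,
    finrank_euclideanSpace_fin, abs_of_pos (inv_pos.mpr (pow_pos hh d)), smul_eq_mul] at hscale
  have hd : (h ^ d)⁻¹ ≠ 0 := by positivity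
  apply mul_left_cancel₀ hd
  rw [← hscale, ← integral_const_mul, ← integral_const_mul]
  exact integral_congr_ae (.of_forall fun v => by ring)

end Gaussian

theorem kernel_smoothing_gradient_bias_bound_general (d : ℕ) (p : EuclideanSpace ℝ (Fin d) → ℝ)
    (hp_smooth : ContDiff ℝ 3 p)
    (hp_deriv_bdd : ∀ i : ℕ, i ≤ 3 → ∃ M : ℝ, ∀ x, ‖iteratedFDeriv ℝ i p x‖ ≤ M) :
    ∃ c₁ > (0 : ℝ), ∀ h : ℝ, h ∈ Set.Ioc (0 : ℝ) 1 →
      ∀ x, ‖gradient (smoothedDensity d p h) x - gradient p x‖ ≤ c₁ * h ^ 2 := by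
  obtain ⟨M₀, hM₀⟩ := hp_deriv_bdd 0 (by norm_num)
  obtain ⟨M₁, hM₁⟩ := hp_deriv_bdd 1 (by norm_num)
  obtain ⟨M₃, hM₃⟩ := hp_deriv_bdd 3 le_rfl
  have hp_bdd : ∀ y, ‖p y‖ ≤ M₀ := fun y => by simpa using hM₀ y
  have hp'_bdd : ∀ y, ‖fderiv ℝ p y‖ ≤ M₁ := fun y => by simpa using hM₁ y
  set C₂ := ∫ v : EuclideanSpace ℝ (Fin d), ‖v‖ ^ 2 * gaussKernel d 1 v
  have hC₂ : 0 ≤ C₂ :=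
    integral_nonneg fun v => mul_nonneg (by positivity) (gaussKernel_nonneg d one_pos v)
  refine ⟨M₃.toNNReal * C₂ + 1, by positivity, fun h ⟨hh, _⟩ x => ?_⟩
  have hderiv : HasFDerivAt (smoothedDensity d p h)
      (∫ u, gaussKernel d h u • fderiv ℝ p (x - u)) x :=
    hasFDerivAt_integral_comp_sub_mul (hp_smooth.of_le (by norm_num)) hp_bdd hp'_bdd
      (Integrable.of_integral_ne_zero (by simp [integral_gaussKernel d hh])) x
  calc ‖gradient (smoothedDensity d p h) x - gradient p x‖
      = ‖(∫ u, gaussKernel d h u • fderiv ℝ p (x - u)) - fderiv ℝ p x‖ := by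
        rw [gradient, gradient, ← map_sub, LinearIsometryEquiv.norm_map, hderiv.fderiv]
    _ ≤ M₃.toNNReal * ∫ u, ‖u‖ ^ 2 * gaussKernel d h u :=
        norm_integral_smul_comp_sub_sub_le (gaussKernel_nonneg d hh) (gaussKernel_neg d)
          (integral_gaussKernel d hh) (integrable_sq_norm_mul_gaussKernel d hh)
          ((hp_smooth.fderiv_right (m := 2) (by norm_num)).differentiable two_ne_zero)
          (hp_smooth.lipschitzWith_fderiv_fderiv hM₃) x
    _ = M₃.toNNReal * C₂ * h ^ 2 := by rw [integral_sq_norm_mul_gaussKernel d hh]; ring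
    _ ≤ (M₃.toNNReal * C₂ + 1) * h ^ 2 := by gcongr; linarith

/-- For a bounded probability density `p` on `ℝ^d` with bounded continuous
derivatives up to and including third order, there is a constant `c₁ > 0` such that for all
`h ∈ (0, 1]`, `sup_x ‖∇p_h(x) - ∇p(x)‖ ≤ c₁ h²`. -/
theorem kernel_smoothing_gradient_bias_bound (d : ℕ) (p : EuclideanSpace ℝ (Fin d) → ℝ)
    (hp_nonneg : ∀ x, 0 ≤ p x)
    (hp_int : ∫ x, p x = 1)
    (hp_smooth : ContDiff ℝ 3 p)
    (hp_deriv_bdd : ∀ i : ℕ, i ≤ 3 → ∃ M : ℝ, ∀ x, ‖iteratedFDeriv ℝ i p x‖ ≤ M) :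
    ∃ c₁ > (0 : ℝ), ∀ h : ℝ, h ∈ Set.Ioc (0 : ℝ) 1 →
      ∀ x, ‖gradient (smoothedDensity d p h) x - gradient p x‖ ≤ c₁ * h ^ 2 :=
  kernel_smoothing_gradient_bias_bound_general d p hp_smooth hp_deriv_bdd
end

section
/- Let p, q : ℝ^d → ℝ be continuously differentiable, let η₁ = sup_x ‖∇p(x) − ∇q(x)‖ with 0 < η₁ < ∞, and assume p is twice differentiable with κ₂ := sup_x ‖∇²p(x)‖ ∈ (0, ∞), where ‖∇²p(x)‖ is the operator norm of the Hessian (so ∇p is κ₂-Lipschitz). Let π, π̃ : [0, ∞) → ℝ^d be differentiable curves with π(0) = π̃(0) = x, π′(t) = ∇p(π(t)) and π̃′(t) = ∇q(π̃(t)) for all t ≥ 0. Then for all t ≥ 0, ‖π̃(t) − π(t)‖ ≤ (η₁ / (κ₂ √d)) · exp(κ₂ √d · t). -/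
/-!
Since `∇²p` is bounded by `κ₂`, the mean value inequality makes `∇p` a `κ₂`-Lipschitz vector
field, and the flow line of `q` is a solution of the flow equation of `p` up to an error at most
`η₁`. Grönwall's inequality bounds the distance between the two flow lines by
`η₁ / κ₂ · (exp (κ₂ t) - 1)`, and Bernoulli's inequality `a (eᵘ - 1) ≤ e^{a u}` for `a = √d ≥ 1`
turns this into the stated bound.
-/

open Real NNReal

section Gradient

variable {F : Type*} [NormedAddCommGroup F] [InnerProductSpace ℝ F] [CompleteSpace F]

theorem ContDiff.differentiable_gradient {f : F → ℝ} (hf : ContDiff ℝ 2 f) :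
    Differentiable ℝ (gradient f) :=
  (InnerProductSpace.toDual ℝ F).symm.differentiable.comp
    ((hf.fderiv_right le_rfl).differentiable one_ne_zero)

theorem ContDiff.lipschitzWith_gradient {f : F → ℝ} (hf : ContDiff ℝ 2 f) {K : ℝ}
    (hK : ∀ x, ‖fderiv ℝ (gradient f) x‖ ≤ K) : LipschitzWith K.toNNReal (gradient f) :=
  lipschitzWith_of_nnnorm_fderiv_le hf.differentiable_gradient fun x ↦ by
    rw [← NNReal.coe_le_coe, coe_nnnorm]
    exact (hK x).trans (le_coe_toNNReal K)

end Gradient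

theorem norm_sub_le_of_trajectories_perturbed_ODE {E : Type*} [NormedAddCommGroup E]
    [NormedSpace ℝ E] {v w : E → E} {K : ℝ≥0} {η : ℝ} (hK : K ≠ 0) (hv : LipschitzWith K v)
    (hvw : ∀ y, ‖v y - w y‖ ≤ η) {f g : ℝ → E}
    (hf : ∀ t, 0 ≤ t → HasDerivAt f (v (f t)) t) (hg : ∀ t, 0 ≤ t → HasDerivAt g (w (g t)) t)
    (h0 : f 0 = g 0) {t : ℝ} (ht : 0 ≤ t) :
    ‖g t - f t‖ ≤ η / K * (exp (K * t) - 1) := by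
  have hfg := dist_le_of_approx_trajectories_ODE (v := fun _ ↦ v) (εf := 0) (εg := η) (δ := 0)
    (fun _ ↦ hv)
    (fun s hs ↦ (hf s hs.1).continuousAt.continuousWithinAt)
    (fun s hs ↦ (hf s hs.1).hasDerivWithinAt) (fun _ _ ↦ by simp)
    (fun s hs ↦ (hg s hs.1).continuousAt.continuousWithinAt)
    (fun s hs ↦ (hg s hs.1).hasDerivWithinAt)
    (fun s _ ↦ by rw [dist_comm, dist_eq_norm]; exact hvw _)
    (by simp [h0]) t ⟨ht, le_rfl⟩
  rw [gronwallBound_of_K_ne_0 (NNReal.coe_ne_zero.mpr hK)] at hfg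
  simpa [dist_eq_norm', norm_sub_rev] using hfg

theorem mul_exp_sub_one_le_exp_mul {a u : ℝ} (ha : 1 ≤ a) (hu : 0 ≤ u) :
    a * (exp u - 1) ≤ exp (a * u) := by
  have bernoulli := one_add_mul_self_le_rpow_one_add (s := exp u - 1)
    (by linarith [one_le_exp hu]) ha
  rw [add_sub_cancel, ← exp_mul, mul_comm u a] at bernoulli
  linarith

theorem flow_perturbation_bound_general (d : ℕ) (hd : 1 ≤ d)
    (p q : EuclideanSpace ℝ (Fin d) → ℝ)
    (hp : ContDiff ℝ 2 p)
    (η₁ : ℝ)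
    (hη₁ : ∀ x, ‖gradient p x - gradient q x‖ ≤ η₁)
    (κ₂ : ℝ) (hκ₂_pos : 0 < κ₂)
    (hκ₂ : ∀ x, ‖fderiv ℝ (gradient p) x‖ ≤ κ₂)
    (x : EuclideanSpace ℝ (Fin d))
    (π₁ π₂ : ℝ → EuclideanSpace ℝ (Fin d))
    (h₁0 : π₁ 0 = x) (h₂0 : π₂ 0 = x)
    (hπ₁ : ∀ t : ℝ, 0 ≤ t → HasDerivAt π₁ (gradient p (π₁ t)) t)
    (hπ₂ : ∀ t : ℝ, 0 ≤ t → HasDerivAt π₂ (gradient q (π₂ t)) t) :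
    ∀ t : ℝ, 0 ≤ t →
      ‖π₂ t - π₁ t‖ ≤ η₁ / (κ₂ * Real.sqrt d) * Real.exp (κ₂ * Real.sqrt d * t) := by
  intro t ht
  have hη₁_nonneg : 0 ≤ η₁ := (norm_nonneg _).trans (hη₁ x)
  have hsqrt_d : 1 ≤ √(d : ℝ) := Real.one_le_sqrt.mpr (by exact_mod_cast hd)
  have hflow := norm_sub_le_of_trajectories_perturbed_ODE
    (Real.toNNReal_pos.mpr hκ₂_pos).ne' (hp.lipschitzWith_gradient hκ₂) hη₁ hπ₁ hπ₂
    (h₁0.trans h₂0.symm) ht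
  rw [Real.coe_toNNReal _ hκ₂_pos.le] at hflow
  calc ‖π₂ t - π₁ t‖ ≤ η₁ / κ₂ * (exp (κ₂ * t) - 1) := hflow
    _ = η₁ / (κ₂ * √d) * (√d * (exp (κ₂ * t) - 1)) := by field_simp
    _ ≤ η₁ / (κ₂ * √d) * exp (√d * (κ₂ * t)) := by
      gcongr
      exact mul_exp_sub_one_le_exp_mul hsqrt_d (by positivity)
    _ = η₁ / (κ₂ * √d) * exp (κ₂ * √d * t) := by ring_nf

/-- Let `p, q : ℝ^d → ℝ` be continuously differentiable with
`sup_x ‖∇p(x) − ∇q(x)‖ ≤ η₁` (`0 < η₁`), and let `p` be twice differentiable with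
`sup_x ‖∇²p(x)‖ ≤ κ₂` (`0 < κ₂`, operator norm, so `∇p` is `κ₂`-Lipschitz).  If `π₁, π₂` are
gradient flow lines of `p` and `q` starting at the same point `x`, then for every `t ≥ 0`,
`‖π₂(t) − π₁(t)‖ ≤ (η₁ / (κ₂ √d)) exp(κ₂ √d t)`. -/
theorem flow_perturbation_bound (d : ℕ) (hd : 1 ≤ d)
    (p q : EuclideanSpace ℝ (Fin d) → ℝ)
    (hp : ContDiff ℝ 2 p) (hq : ContDiff ℝ 1 q)
    (η₁ : ℝ) (hη₁_pos : 0 < η₁)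
    (hη₁ : ∀ x, ‖gradient p x - gradient q x‖ ≤ η₁)
    (κ₂ : ℝ) (hκ₂_pos : 0 < κ₂)
    (hκ₂ : ∀ x, ‖fderiv ℝ (gradient p) x‖ ≤ κ₂)
    (x : EuclideanSpace ℝ (Fin d))
    (π₁ π₂ : ℝ → EuclideanSpace ℝ (Fin d))
    (h₁0 : π₁ 0 = x) (h₂0 : π₂ 0 = x)
    (hπ₁ : ∀ t : ℝ, 0 ≤ t → HasDerivAt π₁ (gradient p (π₁ t)) t)
    (hπ₂ : ∀ t : ℝ, 0 ≤ t → HasDerivAt π₂ (gradient q (π₂ t)) t) :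
    ∀ t : ℝ, 0 ≤ t →
      ‖π₂ t - π₁ t‖ ≤ η₁ / (κ₂ * Real.sqrt d) * Real.exp (κ₂ * Real.sqrt d * t) :=
  flow_perturbation_bound_general d hd p q hp η₁ hη₁ κ₂ hκ₂_pos hκ₂ x π₁ π₂ h₁0 h₂0 hπ₁ hπ₂
end

section
/- Let p, q : ℝ^d → ℝ be continuously differentiable, let η₁ = sup_x ‖∇p(x) − ∇q(x)‖, and assume p is twice differentiable with κ₂ := sup_x ‖∇²p(x)‖ ∈ (0, ∞) (operator norm, so ∇p is κ₂-Lipschitz) and 0 < η₁ < (κ₂ √d)². Let P > 0, γ₀ > 0, and set δ = ( κ₂ √d · P / log(κ₂ √d / √η₁) )^{1/(2γ₀)}. Let π, π̃ : [0, ∞) → ℝ^d be differentiable with π(0) = π̃(0) = x, π′(t) = ∇p(π(t)), π̃′(t) = ∇q(π̃(t)). Then for every time T with 0 ≤ T ≤ P / δ^{2γ₀}, one has ‖π̃(T) − π(T)‖ ≤ √η₁. -/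
open Real Set

/-! The difference `π₂ - π₁` satisfies a Grönwall inequality with rate `κ₂` (the Lipschitz
constant of `∇p`) and forcing `η₁`, so `‖π₂ T - π₁ T‖ ≤ η₁ / κ₂ · (exp (κ₂ T) - 1)`. The time
bound `T ≤ P / δ ^ (2γ₀)` says exactly `κ₂ √d T ≤ log (κ₂ √d / √η₁)`, and Bernoulli's inequality
for the exponent `1 / √d ≤ 1` turns `exp (κ₂ T) ≤ (κ₂ √d / √η₁) ^ (1 / √d)` into
`exp (κ₂ T) - 1 ≤ κ₂ / √η₁`. -/

theorem ContDiff.differentiable_gradient_s18 {E : Type*} [NormedAddCommGroup E]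
    [InnerProductSpace ℝ E] [CompleteSpace E] {f : E → ℝ} {n : WithTop ℕ∞}
    (hf : ContDiff ℝ n f) (hn : 2 ≤ n) : Differentiable ℝ (gradient f) :=
  (InnerProductSpace.toDual ℝ E).symm.toContinuousLinearEquiv.differentiable.comp
    (((hf.of_le hn).fderiv_right le_rfl).differentiable one_ne_zero)

theorem norm_sub_le_gronwallBound_of_perturbed_flow {E : Type*} [NormedAddCommGroup E]
    [NormedSpace ℝ E] {G H : E → E} {K : NNReal} {ε : ℝ} (hG : LipschitzWith K G)
    (hGH : ∀ y, ‖H y - G y‖ ≤ ε) {u v : ℝ → E}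
    (hu : ∀ t, 0 ≤ t → HasDerivAt u (G (u t)) t) (hv : ∀ t, 0 ≤ t → HasDerivAt v (H (v t)) t)
    (h0 : u 0 = v 0) {T : ℝ} (hT : 0 ≤ T) : ‖v T - u T‖ ≤ gronwallBound 0 K ε T := by
  have key := dist_le_of_approx_trajectories_ODE (v := fun _ => G) (δ := 0) (εf := 0)
    (fun _ => hG)
    (fun t ht => (hu t ht.1).continuousAt.continuousWithinAt)
    (fun t ht => (hu t ht.1).hasDerivWithinAt) (fun t _ => by simp)
    (fun t ht => (hv t ht.1).continuousAt.continuousWithinAt)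
    (fun t ht => (hv t ht.1).hasDerivWithinAt) (fun t _ => by rw [dist_eq_norm]; exact hGH _)
    (by simp [h0]) T ⟨hT, le_rfl⟩
  rwa [zero_add, sub_zero, dist_eq_norm'] at key

theorem rpow_inv_le_one_add_sub_one_div {R s : ℝ} (hR : 0 ≤ R) (hs : 1 ≤ s) :
    R ^ s⁻¹ ≤ 1 + (R - 1) / s := by
  have bernoulli := rpow_one_add_le_one_add_mul_self (s := R - 1) (by linarith)
    (p := s⁻¹) (by positivity) (inv_le_one_of_one_le₀ hs)
  rwa [add_sub_cancel, inv_mul_eq_div] at bernoulli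

theorem gronwallBound_zero_le_sqrt {K ε s T : ℝ} (hK : 0 < K) (hε : 0 < ε) (hs : 1 ≤ s)
    (hT : K * s * T ≤ log (K * s / √ε)) : gronwallBound 0 K ε T ≤ √ε := by
  have hR : 0 < K * s / √ε := by positivity
  have hexp : exp (K * T) - 1 ≤ K / √ε :=
    calc exp (K * T) - 1 ≤ exp (log (K * s / √ε) * s⁻¹) - 1 := by
          rw [sub_le_sub_iff_right, exp_le_exp, ← div_eq_mul_inv, le_div_iff₀ (by positivity)]
          linarith
      _ = (K * s / √ε) ^ s⁻¹ - 1 := by rw [rpow_def_of_pos hR]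
      _ ≤ (K * s / √ε - 1) / s := by linarith [rpow_inv_le_one_add_sub_one_div hR.le hs]
      _ ≤ K * s / √ε / s := div_le_div_of_nonneg_right (by linarith) (by linarith)
      _ = K / √ε := by field_simp
  simp only [gronwallBound_of_K_ne_0 hK.ne', zero_mul, zero_add]
  calc ε / K * (exp (K * T) - 1) ≤ ε / K * (K / √ε) := by gcongr
    _ = √ε := by
        field_simp
        rw [sq_sqrt hε.le]

theorem flow_perturbation_bound_up_to_time_general (d : ℕ) (hd : 1 ≤ d)
    (p q : EuclideanSpace ℝ (Fin d) → ℝ)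
    (hp : ContDiff ℝ 2 p)
    (η₁ : ℝ) (hη₁_pos : 0 < η₁)
    (hη₁ : ∀ x, ‖gradient p x - gradient q x‖ ≤ η₁)
    (κ₂ : ℝ) (hκ₂_pos : 0 < κ₂)
    (hκ₂ : ∀ x, ‖fderiv ℝ (gradient p) x‖ ≤ κ₂)
    (hη₁_small : η₁ < (κ₂ * Real.sqrt d) ^ 2)
    (P : ℝ) (hP : 0 < P) (γ₀ : ℝ) (hγ₀ : 0 < γ₀)
    (δ : ℝ)
    (hδ : δ = (κ₂ * Real.sqrt d * P /
        Real.log (κ₂ * Real.sqrt d / Real.sqrt η₁)) ^ (1 / (2 * γ₀)))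
    (x : EuclideanSpace ℝ (Fin d))
    (π₁ π₂ : ℝ → EuclideanSpace ℝ (Fin d))
    (h₁0 : π₁ 0 = x) (h₂0 : π₂ 0 = x)
    (hπ₁ : ∀ t : ℝ, 0 ≤ t → HasDerivAt π₁ (gradient p (π₁ t)) t)
    (hπ₂ : ∀ t : ℝ, 0 ≤ t → HasDerivAt π₂ (gradient q (π₂ t)) t) :
    ∀ T : ℝ, 0 ≤ T → T ≤ P / δ ^ (2 * γ₀) → ‖π₂ T - π₁ T‖ ≤ Real.sqrt η₁ := by
  intro T hT0 hTle
  have hs : 1 ≤ √(d : ℝ) := one_le_sqrt.2 (by exact_mod_cast hd)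
  have hκs : 0 < κ₂ * √d := by positivity
  have hlog : 0 < log (κ₂ * √d / √η₁) :=
    log_pos ((one_lt_div (sqrt_pos.2 hη₁_pos)).2 ((sqrt_lt' hκs).2 hη₁_small))
  have hδpow : δ ^ (2 * γ₀) = κ₂ * √d * P / log (κ₂ * √d / √η₁) := by
    rw [hδ, one_div, rpow_inv_rpow (by positivity) (by positivity)]
  have hTlog : κ₂ * √d * T ≤ log (κ₂ * √d / √η₁) := by
    rw [← le_div_iff₀' hκs]
    exact hTle.trans_eq (by rw [hδpow]; field_simp)
  have hlip : LipschitzWith κ₂.toNNReal (gradient p) :=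
    lipschitzWith_of_nnnorm_fderiv_le (hp.differentiable_gradient_s18 le_rfl) fun y => by
      rw [← NNReal.coe_le_coe, coe_nnnorm, coe_toNNReal _ hκ₂_pos.le]
      exact hκ₂ y
  calc ‖π₂ T - π₁ T‖ ≤ gronwallBound 0 κ₂ η₁ T := by
        simpa only [coe_toNNReal _ hκ₂_pos.le] using
          norm_sub_le_gronwallBound_of_perturbed_flow hlip
            (fun y => (norm_sub_rev _ _).trans_le (hη₁ y)) hπ₁ hπ₂ (h₁0.trans h₂0.symm) hT0
    _ ≤ √η₁ := gronwallBound_zero_le_sqrt hκ₂_pos hη₁_pos hs hTlog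

/-- Let `p, q : ℝ^d → ℝ` be continuously differentiable with
`sup_x ‖∇p(x) − ∇q(x)‖ ≤ η₁`, `p` twice differentiable with `sup_x ‖∇²p(x)‖ ≤ κ₂`
(operator norm), `0 < κ₂`, and `0 < η₁ < (κ₂ √d)²`.  Let `P > 0`, `γ₀ > 0` and
`δ = (κ₂ √d P / log(κ₂ √d / √η₁))^{1/(2γ₀)}`.  If `π₁, π₂` are gradient flow lines of `p`
and `q` starting at the same point `x`, then for every `T` with `0 ≤ T ≤ P / δ^{2γ₀}`,
`‖π₂(T) − π₁(T)‖ ≤ √η₁`. -/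
theorem flow_perturbation_bound_up_to_time (d : ℕ) (hd : 1 ≤ d)
    (p q : EuclideanSpace ℝ (Fin d) → ℝ)
    (hp : ContDiff ℝ 2 p) (hq : ContDiff ℝ 1 q)
    (η₁ : ℝ) (hη₁_pos : 0 < η₁)
    (hη₁ : ∀ x, ‖gradient p x - gradient q x‖ ≤ η₁)
    (κ₂ : ℝ) (hκ₂_pos : 0 < κ₂)
    (hκ₂ : ∀ x, ‖fderiv ℝ (gradient p) x‖ ≤ κ₂)
    (hη₁_small : η₁ < (κ₂ * Real.sqrt d) ^ 2)
    (P : ℝ) (hP : 0 < P) (γ₀ : ℝ) (hγ₀ : 0 < γ₀)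
    (δ : ℝ)
    (hδ : δ = (κ₂ * Real.sqrt d * P /
        Real.log (κ₂ * Real.sqrt d / Real.sqrt η₁)) ^ (1 / (2 * γ₀)))
    (x : EuclideanSpace ℝ (Fin d))
    (π₁ π₂ : ℝ → EuclideanSpace ℝ (Fin d))
    (h₁0 : π₁ 0 = x) (h₂0 : π₂ 0 = x)
    (hπ₁ : ∀ t : ℝ, 0 ≤ t → HasDerivAt π₁ (gradient p (π₁ t)) t)
    (hπ₂ : ∀ t : ℝ, 0 ≤ t → HasDerivAt π₂ (gradient q (π₂ t)) t) :
    ∀ T : ℝ, 0 ≤ T → T ≤ P / δ ^ (2 * γ₀) → ‖π₂ T - π₁ T‖ ≤ Real.sqrt η₁ :=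
  flow_perturbation_bound_up_to_time_general d hd p q hp η₁ hη₁_pos hη₁ κ₂ hκ₂_pos hκ₂ hη₁_small P
    hP γ₀ hγ₀ δ hδ x π₁ π₂ h₁0 h₂0 hπ₁ hπ₂
end
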